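/- Let $N \ge 2$ and consider the field $K_N = \mathbb{C}(\alpha_i, f_i, \tau_i : i \in \mathbb{Z}/N\mathbb{Z})$ with automorphisms $\bar{s}_i$ ($i \in \mathbb{Z}/N\mathbb{Z}$) defined by the same formulas as $s_i$ with indices read modulo $N$: $\bar{s}_i(\alpha_i)=-\alpha_i$, $\bar{s}_i(\alpha_{i\pm1})=\alpha_{i\pm1}+\alpha_i$, $\bar{s}_i(f_{i\pm1})=f_{i\pm1}\pm\alpha_i/f_i$, $\bar{s}_i(\tau_i)=f_i\tau_{i-1}\tau_{i+1}/\tau_i$, other generators fixed. Then for $N \ge 3$ the $\bar{s}_i$ satisfy the affine $A^{(1)}_{N-1}$ Coxeter relations: $\bar{s}_i^2 = \mathrm{id}$, $(\bar{s}_i \bar{s}_{i+1})^3 = \mathrm{id}$, and $\bar{s}_i \bar{s}_j = \bar{s}_j \bar{s}_i$ when $j \not\equiv i \pm 1 \pmod N$. -/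

import Mathlib

/-!
The `s i` are field automorphisms and `K` is generated by the `α k, f k, τ k`, so each relation
only has to be checked on these generators. On `α k` and `f k` every `s i` is a translation
`x ↦ x + n • u i` with `n ∈ ℤ`, where `u i = α i` resp. `α i / f i` is negated by `s i`. For such
translations `s i ^ 2 = 1` and the commutation relations are formal, and the braid relation
reduces to the identity `u i + s i (s (i + 1) (u i)) = s (i + 1) (u i)` and its mirror image,
which are rational identities in `α i, α (i + 1), f i, f (i + 1)`. On the `τ k` only `τ i` and
`τ (i + 1)` are moved by `s i` or `s (i + 1)`, and there the braid relation says that `s i` fixes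
`s (i + 1) (s i (τ i)) = (f i f (i + 1) - α (i + 1)) τ (i - 1) τ (i + 2) / τ (i + 1)`, and
symmetrically. Finally `(s i s (i + 1)) ^ 3 = 1` follows from the braid relation and `s i ^ 2 = 1`.
-/

open Set

theorem pow_three_eq_one_of_braid {G : Type*} [Monoid G] {a b : G} (ha : a * a = 1)
    (hb : b * b = 1) (hab : a * b * a = b * a * b) : (a * b) ^ 3 = 1 :=
  calc (a * b) ^ 3 = (a * b * a) * (b * a * b) := by
        simp only [pow_succ, pow_zero, one_mul, mul_assoc]
    _ = b * (a * (b * b) * a) * b := by rw [hab]; simp only [mul_assoc]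
    _ = 1 := by rw [hb, mul_one, ha, mul_one, hb]

theorem ZMod.two_ne_zero_of_three_le {N : ℕ} (hN : 3 ≤ N) : (2 : ZMod N) ≠ 0 := by
  have : ((2 : ℕ) : ZMod N) ≠ 0 := by
    rw [Ne, ZMod.natCast_eq_zero_iff]
    exact fun h => absurd (Nat.le_of_dvd two_pos h) (by omega)
  exact_mod_cast this

namespace RingAut

theorem ext_of_closure_ranges_eq_top {K ι : Type*} [Field K] {α f τ : ι → K}
    (hgen : Subfield.closure (range α ∪ range f ∪ range τ) = ⊤) {g h : RingAut K}
    (hα : ∀ k, g (α k) = h (α k)) (hf : ∀ k, g (f k) = h (f k))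
    (hτ : ∀ k, g (τ k) = h (τ k)) : g = h := by
  refine RingEquiv.toRingHom_injective (RingHom.eq_of_eqOn_of_field_closure_eq_top hgen ?_)
  rintro x ((⟨k, rfl⟩ | ⟨k, rfl⟩) | ⟨k, rfl⟩)
  exacts [hα k, hf k, hτ k]

variable {R : Type*} [CommRing R]

theorem apply_apply_eq_self_of_apply_eq_add_mul (g : RingAut R) {u x : R} (n : ℤ)
    (hu : g u = -u) (hx : g x = x + n * u) : g (g x) = x := by
  rw [hx, map_add, map_mul, map_intCast, hx, hu]; ring

theorem apply_apply_comm_of_apply_eq_add_mul (g h : RingAut R) {u v x : R} (m n : ℤ)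
    (hu : h u = u) (hv : g v = v) (hgx : g x = x + m * u) (hhx : h x = x + n * v) :
    g (h x) = h (g x) := by
  rw [hhx, hgx, map_add, map_add, map_mul, map_mul, map_intCast, map_intCast, hgx, hhx, hu, hv]
  ring

theorem apply_braid_of_apply_eq_add_mul (g h : RingAut R) {u v x : R} (m n : ℤ)
    (huv : u + g (h u) = h u) (hvu : v + h (g v) = g v)
    (hgx : g x = x + m * u) (hhx : h x = x + n * v) : g (h (g x)) = h (g (h x)) := by
  simp only [hgx, hhx, map_add, map_mul, map_intCast]
  linear_combination (m : R) * huv - (n : R) * hvu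

end RingAut

structure ReflectionFormulas {K : Type*} [Field K] {N : ℕ} (s : ZMod N → RingAut K)
    (α f τ : ZMod N → K) : Prop where
  apply_α_self : ∀ i, s i (α i) = -α i
  apply_α_succ : ∀ i, s i (α (i + 1)) = α (i + 1) + α i
  apply_α_pred : ∀ i, s i (α (i - 1)) = α (i - 1) + α i
  apply_α_of_ne : ∀ i j, j ≠ i → j ≠ i + 1 → j ≠ i - 1 → s i (α j) = α j
  apply_f_self : ∀ i, s i (f i) = f i
  apply_f_succ : ∀ i, s i (f (i + 1)) = f (i + 1) + α i / f i
  apply_f_pred : ∀ i, s i (f (i - 1)) = f (i - 1) - α i / f i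
  apply_f_of_ne : ∀ i j, j ≠ i → j ≠ i + 1 → j ≠ i - 1 → s i (f j) = f j
  apply_τ_self : ∀ i, s i (τ i) = f i * τ (i - 1) * τ (i + 1) / τ i
  apply_τ_of_ne : ∀ i j, j ≠ i → s i (τ j) = τ j

namespace ReflectionFormulas

variable {K : Type*} [Field K] {N : ℕ} {s : ZMod N → RingAut K} {α f τ : ZMod N → K}

theorem exists_apply_α (hs : ReflectionFormulas s α f τ) (i k : ZMod N) :
    ∃ n : ℤ, s i (α k) = α k + n * α i := by
  by_cases hi : k = i
  · exact ⟨-2, by rw [hi, hs.apply_α_self]; push_cast; ring⟩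
  by_cases hsucc : k = i + 1
  · exact ⟨1, by rw [hsucc, hs.apply_α_succ]; push_cast; ring⟩
  by_cases hpred : k = i - 1
  · exact ⟨1, by rw [hpred, hs.apply_α_pred]; push_cast; ring⟩
  exact ⟨0, by rw [hs.apply_α_of_ne i k hi hsucc hpred]; push_cast; ring⟩

theorem exists_apply_f (hs : ReflectionFormulas s α f τ) (i k : ZMod N) :
    ∃ n : ℤ, s i (f k) = f k + n * (α i / f i) := by
  by_cases hi : k = i
  · exact ⟨0, by rw [hi, hs.apply_f_self]; push_cast; ring⟩
  by_cases hsucc : k = i + 1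
  · exact ⟨1, by rw [hsucc, hs.apply_f_succ]; push_cast; ring⟩
  by_cases hpred : k = i - 1
  · exact ⟨-1, by rw [hpred, hs.apply_f_pred]; push_cast; ring⟩
  exact ⟨0, by rw [hs.apply_f_of_ne i k hi hsucc hpred]; push_cast; ring⟩

theorem apply_α_div_f_self (hs : ReflectionFormulas s α f τ) (i : ZMod N) :
    s i (α i / f i) = -(α i / f i) := by
  rw [map_div₀, hs.apply_α_self, hs.apply_f_self, neg_div]

theorem succ_apply_α (hs : ReflectionFormulas s α f τ) (i : ZMod N) :
    s (i + 1) (α i) = α i + α (i + 1) := by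
  simpa using hs.apply_α_pred (i + 1)

theorem succ_apply_f (hs : ReflectionFormulas s α f τ) (i : ZMod N) :
    s (i + 1) (f i) = f i - α (i + 1) / f (i + 1) := by
  simpa using hs.apply_f_pred (i + 1)

theorem apply_apply_τ [Fact (1 < N)] (hs : ReflectionFormulas s α f τ) (hf : ∀ i, f i ≠ 0)
    (hτ : ∀ i, τ i ≠ 0) (i k : ZMod N) : s i (s i (τ k)) = τ k := by
  obtain rfl | hk := eq_or_ne i k
  · have hpred : i - 1 ≠ i := mt sub_eq_self.mp one_ne_zero
    have hsucc : i + 1 ≠ i := add_ne_left.mpr one_ne_zero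
    rw [hs.apply_τ_self, map_div₀, map_mul, map_mul, hs.apply_f_self, hs.apply_τ_self,
      hs.apply_τ_of_ne i _ hpred, hs.apply_τ_of_ne i _ hsucc]
    field_simp [hf i, hτ i, hτ (i - 1), hτ (i + 1)]
  · rw [hs.apply_τ_of_ne i k hk.symm, hs.apply_τ_of_ne i k hk.symm]

theorem mul_self [Fact (1 < N)] (hs : ReflectionFormulas s α f τ) (hf : ∀ i, f i ≠ 0)
    (hτ : ∀ i, τ i ≠ 0) (hgen : Subfield.closure (range α ∪ range f ∪ range τ) = ⊤)
    (i : ZMod N) : s i * s i = 1 := by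
  refine RingAut.ext_of_closure_ranges_eq_top hgen (fun k => ?_) (fun k => ?_) (fun k => ?_)
  · obtain ⟨n, hn⟩ := hs.exists_apply_α i k
    exact (s i).apply_apply_eq_self_of_apply_eq_add_mul n (hs.apply_α_self i) hn
  · obtain ⟨n, hn⟩ := hs.exists_apply_f i k
    exact (s i).apply_apply_eq_self_of_apply_eq_add_mul n (hs.apply_α_div_f_self i) hn
  · exact hs.apply_apply_τ hf hτ i k

theorem commute (hs : ReflectionFormulas s α f τ)
    (hgen : Subfield.closure (range α ∪ range f ∪ range τ) = ⊤) {i j : ZMod N}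
    (hsucc : j ≠ i + 1) (hpred : j ≠ i - 1) : s i * s j = s j * s i := by
  obtain rfl | hji := eq_or_ne j i
  · rfl
  have hij : i ≠ j := hji.symm
  have hisucc : i ≠ j + 1 := fun h => hpred (eq_sub_of_add_eq h.symm)
  have hipred : i ≠ j - 1 := fun h => hsucc (eq_add_of_sub_eq h.symm)
  refine RingAut.ext_of_closure_ranges_eq_top hgen (fun k => ?_) (fun k => ?_) (fun k => ?_)
  · obtain ⟨m, hm⟩ := hs.exists_apply_α i k
    obtain ⟨n, hn⟩ := hs.exists_apply_α j k
    exact RingAut.apply_apply_comm_of_apply_eq_add_mul _ _ m n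
      (hs.apply_α_of_ne j i hij hisucc hipred) (hs.apply_α_of_ne i j hji hsucc hpred) hm hn
  · obtain ⟨m, hm⟩ := hs.exists_apply_f i k
    obtain ⟨n, hn⟩ := hs.exists_apply_f j k
    refine RingAut.apply_apply_comm_of_apply_eq_add_mul _ _ m n ?_ ?_ hm hn
    · rw [map_div₀, hs.apply_α_of_ne j i hij hisucc hipred, hs.apply_f_of_ne j i hij hisucc hipred]
    · rw [map_div₀, hs.apply_α_of_ne i j hji hsucc hpred, hs.apply_f_of_ne i j hji hsucc hpred]
  · show s i (s j (τ k)) = s j (s i (τ k))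
    obtain rfl | hik := eq_or_ne i k
    · rw [hs.apply_τ_of_ne j i hij, hs.apply_τ_self, map_div₀, map_mul, map_mul,
        hs.apply_f_of_ne j i hij hisucc hipred, hs.apply_τ_of_ne j _ hpred.symm,
        hs.apply_τ_of_ne j _ hsucc.symm, hs.apply_τ_of_ne j i hij]
    obtain rfl | hjk := eq_or_ne j k
    · rw [hs.apply_τ_of_ne i j hji, hs.apply_τ_self, map_div₀, map_mul, map_mul,
        hs.apply_f_of_ne i j hji hsucc hpred, hs.apply_τ_of_ne i _ hipred.symm,
        hs.apply_τ_of_ne i _ hisucc.symm, hs.apply_τ_of_ne i j hji]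
    rw [hs.apply_τ_of_ne j k hjk.symm, hs.apply_τ_of_ne i k hik.symm,
      hs.apply_τ_of_ne j k hjk.symm]

theorem apply_braid_α (hs : ReflectionFormulas s α f τ) (i k : ZMod N) :
    s i (s (i + 1) (s i (α k))) = s (i + 1) (s i (s (i + 1) (α k))) := by
  obtain ⟨m, hm⟩ := hs.exists_apply_α i k
  obtain ⟨n, hn⟩ := hs.exists_apply_α (i + 1) k
  refine RingAut.apply_braid_of_apply_eq_add_mul _ _ m n ?_ ?_ hm hn
  · rw [hs.succ_apply_α, map_add, hs.apply_α_self, hs.apply_α_succ]; ring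
  · rw [hs.apply_α_succ, map_add, hs.apply_α_self, hs.succ_apply_α]; ring

theorem apply_braid_f (hs : ReflectionFormulas s α f τ) (hf : ∀ i, f i ≠ 0) (i k : ZMod N) :
    s i (s (i + 1) (s i (f k))) = s (i + 1) (s i (s (i + 1) (f k))) := by
  have hx := hf i
  have hy := hf (i + 1)
  -- `P` and `Q` stay opaque, so that `field_simp` can use `hP0` and `hQ0` for the denominators.
  obtain ⟨P, hP⟩ : ∃ P, P = f i * f (i + 1) + α i := ⟨_, rfl⟩
  obtain ⟨Q, hQ⟩ : ∃ Q, Q = f i * f (i + 1) - α (i + 1) := ⟨_, rfl⟩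
  have hgy : s i (f (i + 1)) = P / f i := by rw [hs.apply_f_succ, hP]; field_simp
  have hhx : s (i + 1) (f i) = Q / f (i + 1) := by rw [hs.succ_apply_f, hQ]; field_simp
  have hgxy : s i (f i * f (i + 1)) = P := by rw [map_mul, hs.apply_f_self, hgy]; field_simp
  have hhxy : s (i + 1) (f i * f (i + 1)) = Q := by rw [map_mul, hs.apply_f_self, hhx]; field_simp
  have hP0 : P ≠ 0 := hgxy ▸ (map_ne_zero _).mpr (mul_ne_zero hx hy)
  have hQ0 : Q ≠ 0 := hhxy ▸ (map_ne_zero _).mpr (mul_ne_zero hx hy)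
  have hgQ : s i Q = Q := by
    rw [hQ, map_sub, hgxy, hs.apply_α_succ, hP]; ring
  have hhP : s (i + 1) P = P := by
    rw [hP, map_add, hhxy, hs.succ_apply_α, hQ]; ring
  obtain ⟨m, hm⟩ := hs.exists_apply_f i k
  obtain ⟨n, hn⟩ := hs.exists_apply_f (i + 1) k
  refine RingAut.apply_braid_of_apply_eq_add_mul _ _ m n ?_ ?_ hm hn
  · simp only [map_div₀, map_add, hs.apply_α_self, hs.apply_α_succ, hs.succ_apply_α,
      hhx, hgy, hgQ]
    field_simp
    rw [hP, hQ]
    ring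
  · simp only [map_div₀, map_add, hs.apply_α_self, hs.apply_α_succ, hs.succ_apply_α,
      hhx, hgy, hhP]
    field_simp
    rw [hP, hQ]
    ring

theorem apply_braid_τ (hs : ReflectionFormulas s α f τ) (hf : ∀ i, f i ≠ 0)
    (hτ : ∀ i, τ i ≠ 0) (hN : 3 ≤ N) (i k : ZMod N) :
    s i (s (i + 1) (s i (τ k))) = s (i + 1) (s i (s (i + 1) (τ k))) := by
  have h2 := ZMod.two_ne_zero_of_three_le hN
  have h1 : (1 : ZMod N) ≠ 0 := fun h => h2 (by rw [← one_add_one_eq_two, h, add_zero])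
  have hsucc : ∀ j : ZMod N, j + 1 ≠ j := fun j => add_ne_left.mpr h1
  have hpred : i - 1 ≠ i := mt sub_eq_self.mp h1
  have hpred_succ : i - 1 ≠ i + 1 := fun h => h2 (by linear_combination -h)
  have hsucc_succ : i + 1 + 1 ≠ i := fun h => h2 (by linear_combination h)
  have hgτ : ∀ j ≠ i, s i (τ j) = τ j := hs.apply_τ_of_ne i
  have hhτ : ∀ j ≠ i + 1, s (i + 1) (τ j) = τ j := hs.apply_τ_of_ne (i + 1)
  have hhτ_succ : s (i + 1) (τ (i + 1)) = f (i + 1) * τ i * τ (i + 1 + 1) / τ (i + 1) := by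
    simpa using hs.apply_τ_self (i + 1)
  obtain rfl | hki := eq_or_ne i k
  · have hw : s (i + 1) (s i (τ i)) =
        (f i * f (i + 1) - α (i + 1)) * τ (i - 1) * τ (i + 1 + 1) / τ (i + 1) := by
      rw [hs.apply_τ_self, map_div₀, map_mul, map_mul, hs.succ_apply_f, hhτ _ hpred_succ,
        hhτ_succ, hhτ i (hsucc i).symm]
      field_simp [hf (i + 1), hτ i]
    rw [hhτ i (hsucc i).symm, hw, map_div₀, map_mul, map_mul, map_sub, map_mul, hs.apply_f_self,
      hs.apply_f_succ, hs.apply_α_succ, hgτ _ hpred, hgτ _ hsucc_succ, hgτ _ (hsucc i)]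
    field_simp [hf i]
    ring
  obtain rfl | hki' := eq_or_ne (i + 1) k
  · have hw : s i (s (i + 1) (τ (i + 1))) =
        (f i * f (i + 1) + α i) * τ (i - 1) * τ (i + 1 + 1) / τ i := by
      rw [hhτ_succ, map_div₀, map_mul, map_mul, hs.apply_f_succ, hs.apply_τ_self,
        hgτ _ hsucc_succ, hgτ _ (hsucc i)]
      field_simp [hf i, hτ (i + 1)]
    rw [hgτ _ (hsucc i), hw, map_div₀, map_mul, map_mul, map_add, map_mul, hs.apply_f_self,
      hs.succ_apply_f, hs.succ_apply_α, hhτ _ hpred_succ, hhτ _ (hsucc (i + 1)),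
      hhτ i (hsucc i).symm]
    field_simp [hf (i + 1)]
    ring
  simp only [hgτ k hki.symm, hhτ k hki'.symm]

theorem braid (hs : ReflectionFormulas s α f τ) (hf : ∀ i, f i ≠ 0) (hτ : ∀ i, τ i ≠ 0)
    (hgen : Subfield.closure (range α ∪ range f ∪ range τ) = ⊤) (hN : 3 ≤ N) (i : ZMod N) :
    s i * s (i + 1) * s i = s (i + 1) * s i * s (i + 1) :=
  RingAut.ext_of_closure_ranges_eq_top hgen (hs.apply_braid_α i) (hs.apply_braid_f hf i)
    (hs.apply_braid_τ hf hτ hN i)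

end ReflectionFormulas

/-- The `N`-reduced representation (Remark 1): on a field `K` generated by the variables
`αᵢ, fᵢ, τᵢ` with `i ∈ ℤ/Nℤ`, the automorphisms `s̄ᵢ` defined by the same formulas as `sᵢ`
with indices read modulo `N` satisfy, for `N ≥ 3`, the Coxeter relations of the affine Weyl
group of type `A⁽¹⁾_{N-1}`: `s̄ᵢ² = 1`, `(s̄ᵢ s̄ᵢ₊₁)³ = 1`, and `s̄ᵢ s̄ⱼ = s̄ⱼ s̄ᵢ` whenever
`j ≢ i ± 1 (mod N)`. -/
theorem stmt_19 {K : Type*} [Field K] (N : ℕ) (hN : 3 ≤ N)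
    (α f τ : ZMod N → K)
    (hf : ∀ i, f i ≠ 0) (hτ : ∀ i, τ i ≠ 0)
    (hgen : Subfield.closure (Set.range α ∪ Set.range f ∪ Set.range τ) = ⊤)
    (s : ZMod N → RingAut K)
    (hα1 : ∀ i, s i (α i) = -α i)
    (hα2 : ∀ i, s i (α (i + 1)) = α (i + 1) + α i)
    (hα3 : ∀ i, s i (α (i - 1)) = α (i - 1) + α i)
    (hα4 : ∀ i j, j ≠ i → j ≠ i + 1 → j ≠ i - 1 → s i (α j) = α j)
    (hf1 : ∀ i, s i (f i) = f i)
    (hf2 : ∀ i, s i (f (i + 1)) = f (i + 1) + α i / f i)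
    (hf3 : ∀ i, s i (f (i - 1)) = f (i - 1) - α i / f i)
    (hf4 : ∀ i j, j ≠ i → j ≠ i + 1 → j ≠ i - 1 → s i (f j) = f j)
    (hτ1 : ∀ i, s i (τ i) = f i * τ (i - 1) * τ (i + 1) / τ i)
    (hτ2 : ∀ i j, j ≠ i → s i (τ j) = τ j) :
    (∀ i, s i * s i = 1) ∧
    (∀ i, (s i * s (i + 1)) ^ 3 = 1) ∧
    (∀ i j, j ≠ i + 1 → j ≠ i - 1 → s i * s j = s j * s i) := by
  have hs : ReflectionFormulas s α f τ := ⟨hα1, hα2, hα3, hα4, hf1, hf2, hf3, hf4, hτ1, hτ2⟩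
  have : Fact (1 < N) := ⟨by omega⟩
  have hinv := hs.mul_self hf hτ hgen
  exact ⟨hinv,
    fun i => pow_three_eq_one_of_braid (hinv i) (hinv (i + 1)) (hs.braid hf hτ hgen hN i),
    fun i j => hs.commute hgen⟩
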